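/- arXiv:1706.09349 — 3 statements merged into one kernel-verified Lean document; each statement's English description precedes it below -/
import Mathlib

section
/- Optimal Łojasiewicz–Simon gradient inequality for C² Morse–Bott functions on Banach spaces (Theorem 3 of the paper, straightened form). Let X, G, Y, H be real Banach spaces with continuous embeddings X ⊂ G and Y ⊂ H ⊂ G* ⊂ X*, where the embedding G* ⊂ X* is the transpose (adjoint) of the embedding X ⊂ G. Let U ⊂ X be an open convex subset, let E : U → ℝ be a C² function, let x∞ ∈ U be a critical point of E (E'(x∞) = 0), and let M : U → Y be a C¹ gradient map for E. Set K := ker E''(x∞) (the kernel of the bounded operator E''(x∞) : X → X*, a ↦ E''(x∞)(a,·)), and assume E is Morse–Bott at x∞ in the straightened sense that Crit E ∩ U = (x∞ + K) ∩ U. Assume further: (i) for each x ∈ U the bounded operator M'(x) : X → Y admits a bounded extension M₁(x) : G → H, meaning that M₁(x) composed with the embedding X ⊂ G agrees with M'(x) composed with the embedding Y ⊂ H, and the map U ∋ x ↦ M₁(x) ∈ L(G,H) is continuous in the operator norm; (ii) K has a closed complement X₀ in X; (iii) ker M₁(x∞) has a closed complement G₀ in G with X₀ ⊂ G₀ (via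 the embedding X ⊂ G); and (iv) the range of M₁(x∞) is a closed subspace of H. Then there exist constants Z > 0 and σ ∈ (0,1] such that every x ∈ U with ‖x − x∞‖_X < σ satisfies ‖M(x)‖_H ≥ Z · |E(x) − E(x∞)|^{1/2}. -/
/-!
Split `x - xinf = k + ξ` with `k ∈ K` and `ξ ∈ X₀`. By the Morse–Bott hypothesis the segment from
`xinf` to `xinf + k` consists of critical points, so `E (xinf + k) = E xinf` and `M (xinf + k) = 0`.
Since `M₁ xinf` has closed range, the open mapping theorem bounds it below by some `μ > 0` on `G₀`,
and by continuity `M₁` stays `μ / 2`-close to `M₁ xinf` near `xinf`. Integrating along the segment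
from `xinf + k` to `x` then gives `‖M x‖_H ≥ (μ / 2) ‖ξ‖_G` and `‖M‖_H = O(‖ξ‖_G)` on it;
integrating once more, `|E x - E xinf| = O(‖ξ‖_G ^ 2)`. Both estimates are in the `G`-norm of `ξ`,
so they combine into the inequality with exponent `1 / 2`.
-/

open Set Function Convex

theorem ContinuousLinearMap.exists_pos_mul_norm_le_of_isCompl_ker
    {𝕜 G H : Type*} [NontriviallyNormedField 𝕜]
    [NormedAddCommGroup G] [NormedSpace 𝕜 G] [CompleteSpace G]
    [NormedAddCommGroup H] [NormedSpace 𝕜 H] [CompleteSpace H]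
    (A : G →L[𝕜] H) {G₀ : Submodule 𝕜 G} (hG₀ : IsClosed (G₀ : Set G))
    (hcompl : IsCompl (LinearMap.ker (A : G →ₗ[𝕜] H)) G₀)
    (hrange : IsClosed (LinearMap.range (A : G →ₗ[𝕜] H) : Set H)) :
    ∃ μ > 0, ∀ g ∈ G₀, μ * ‖g‖ ≤ ‖A g‖ := by
  have := hG₀.completeSpace_coe
  have hinj : Injective (A ∘L G₀.subtypeL) := fun g g' hgg' ↦ by
    refine sub_eq_zero.1 (Subtype.ext (Submodule.disjoint_def.1 hcompl.disjoint _ ?_ (g - g').2))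
    simpa [sub_eq_zero] using hgg'
  have hrange' : Set.range (A ∘L G₀.subtypeL) = LinearMap.range (A : G →ₗ[𝕜] H) := by
    rw [← Submodule.map_eq_range_iff.2 hcompl.codisjoint.symm]
    ext; simp
  obtain ⟨μ, hμ, hA⟩ := antilipschitzWith_iff_exists_mul_le_norm.1
    ((A ∘L G₀.subtypeL).antilipschitz_of_injective_of_isClosed_range hinj (hrange' ▸ hrange))
  exact ⟨μ, hμ, fun g hg ↦ hA ⟨g, hg⟩⟩

theorem Submodule.exists_add_eq_norm_le_of_isCompl
    {𝕜 E : Type*} [NontriviallyNormedField 𝕜] [NormedAddCommGroup E] [NormedSpace 𝕜 E]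
    [CompleteSpace E] {p q : Submodule 𝕜 E} (h : IsCompl p q)
    (hp : IsClosed (p : Set E)) (hq : IsClosed (q : Set E)) :
    ∃ C ≥ 0, ∀ v : E, ∃ k ∈ p, ∃ ξ ∈ q, k + ξ = v ∧ ‖k‖ ≤ C * ‖v‖ := by
  have hTop := Submodule.IsCompl.isTopCompl_of_isClosed h hp hq
  exact ⟨‖p.projectionL q hTop‖, norm_nonneg _, fun v ↦
    ⟨_, projectionL_apply_mem hTop v, _, projectionL_apply_mem hTop.symm v,
      projectionL_add_projectionL_eq_self hTop v, (p.projectionL q hTop).le_opNorm v⟩⟩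

theorem ContinuousOn.exists_ball_subset_forall_norm_sub_le
    {α β : Type*} [PseudoMetricSpace α] [SeminormedAddCommGroup β] {f : α → β} {U : Set α}
    (hf : ContinuousOn f U) (hU : IsOpen U) {x : α} (hx : x ∈ U) {ε : ℝ} (hε : 0 < ε) :
    ∃ δ > 0, Metric.ball x δ ⊆ U ∧ ∀ z ∈ Metric.ball x δ, ‖f z - f x‖ ≤ ε := by
  obtain ⟨δ, hδ, h⟩ := Metric.eventually_nhds_iff_ball.1 <| (hU.eventually_mem hx).and <|
    (hf.continuousAt (hU.mem_nhds hx)).eventually (Metric.closedBall_mem_nhds _ hε)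
  exact ⟨δ, hδ, fun z hz ↦ (h z hz).1, fun z hz ↦ by simpa [dist_eq_norm] using (h z hz).2⟩

theorem Submodule.sub_mem_of_mem_segment_add {𝕜 E : Type*} [Ring 𝕜] [PartialOrder 𝕜]
    [IsOrderedRing 𝕜] [AddCommGroup E] [Module 𝕜 E] {p : Submodule 𝕜 E} {x k z : E}
    (hk : k ∈ p) (hz : z ∈ [x -[𝕜] x + k]) : z - x ∈ p := by
  obtain ⟨θ, -, rfl⟩ := segment_eq_image' 𝕜 x (x + k) ▸ hz
  simpa using p.smul_mem θ hk

theorem norm_sub_sub_le_of_norm_deriv_sub_le_segment_01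
    {F : Type*} [NormedAddCommGroup F] [NormedSpace ℝ F] {f f' : ℝ → F} {w : F} {C : ℝ}
    (hf : ∀ t ∈ Icc (0 : ℝ) 1, HasDerivWithinAt f (f' t) (Icc 0 1) t)
    (bound : ∀ t ∈ Ico (0 : ℝ) 1, ‖f' t - w‖ ≤ C) :
    ‖f 1 - f 0 - w‖ ≤ C := by
  have hg : ∀ t ∈ Icc (0 : ℝ) 1,
      HasDerivWithinAt (fun t ↦ f t - t • w) (f' t - w) (Icc 0 1) t := fun t ht ↦
    (hf t ht).sub (by simpa using (hasDerivWithinAt_id t _).smul_const w)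
  simpa [sub_right_comm] using norm_image_sub_le_of_norm_deriv_le_segment_01' hg bound

theorem norm_image_sub_sub_le_of_norm_fderiv_apply_sub_le_segment
    {E F : Type*} [NormedAddCommGroup E] [NormedSpace ℝ E] [NormedAddCommGroup F] [NormedSpace ℝ F]
    {f : E → F} {f' : E → E →L[ℝ] F} {x y : E} {w : F} {C : ℝ}
    (hf : ∀ z ∈ [x -[ℝ] y], HasFDerivAt f (f' z) z)
    (bound : ∀ z ∈ [x -[ℝ] y], ‖f' z (y - x) - w‖ ≤ C) :
    ‖f y - f x - w‖ ≤ C := by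
  have hmem : ∀ t ∈ Icc (0 : ℝ) 1, x + t • (y - x) ∈ [x -[ℝ] y] := fun t ht ↦
    segment_eq_image' ℝ x y ▸ mem_image_of_mem _ ht
  have hpath : ∀ t : ℝ, HasDerivAt (fun t : ℝ ↦ x + t • (y - x)) (y - x) t := fun t ↦ by
    simpa using ((hasDerivAt_id t).smul_const (y - x)).const_add x
  simpa using norm_sub_sub_le_of_norm_deriv_sub_le_segment_01
    (f := fun t ↦ f (x + t • (y - x))) (w := w)
    (fun t ht ↦ ((hf _ (hmem t ht)).comp_hasDerivAt t (hpath t)).hasDerivWithinAt)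
    (fun t ht ↦ bound _ (hmem t (Ico_subset_Icc_self ht)))

theorem eq_of_forall_mem_segment_fderiv_eq_zero
    {E F : Type*} [NormedAddCommGroup E] [NormedSpace ℝ E] [NormedAddCommGroup F] [NormedSpace ℝ F]
    {f : E → F} {x y : E} (hf : ∀ z ∈ [x -[ℝ] y], DifferentiableAt ℝ f z)
    (h : ∀ z ∈ [x -[ℝ] y], fderiv ℝ f z = 0) : f y = f x := by
  have := norm_image_sub_sub_le_of_norm_fderiv_apply_sub_le_segment (w := 0) (C := 0)
    (fun z hz ↦ (hf z hz).hasFDerivAt) (fun z hz ↦ by simp [h z hz])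
  simpa [sub_eq_zero] using this

theorem div_sqrt_mul_sqrt_abs_le_of_le_mul_of_abs_le_mul_sq {a b c D r : ℝ} (hc : 0 ≤ c)
    (hD : 0 ≤ D) (hr : 0 ≤ r) (ha : c * r ≤ a) (hb : |b| ≤ D * r ^ 2) :
    c / √(D + 1) * √|b| ≤ a := by
  have hD₁ : 0 < D + 1 := by linarith
  have hb' : √|b| ≤ √(D + 1) * r := by
    calc √|b| ≤ √((D + 1) * r ^ 2) := Real.sqrt_le_sqrt (by nlinarith [sq_nonneg r])
      _ = √(D + 1) * r := by rw [Real.sqrt_mul hD₁.le, Real.sqrt_sq hr]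
  calc c / √(D + 1) * √|b| ≤ c / √(D + 1) * (√(D + 1) * r) := by gcongr
    _ = c * r := by field_simp
    _ ≤ a := ha

section GradientMap

variable {X G Y H : Type*} [NormedAddCommGroup X] [NormedSpace ℝ X]
  [NormedAddCommGroup G] [NormedSpace ℝ G] [NormedAddCommGroup Y] [NormedSpace ℝ Y]
  [NormedAddCommGroup H] [NormedSpace ℝ H]
  {jXG : X →L[ℝ] G} {jYH : Y →L[ℝ] H} {jHG : H →L[ℝ] (G →L[ℝ] ℝ)}
  {E : X → ℝ} {M : X → Y} {M₁ : X → G →L[ℝ] H}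

theorem gradient_eq_zero_of_fderiv_eq_zero {z : X} (hjHG : Injective jHG)
    (hTransInj : Injective fun φ : G →L[ℝ] ℝ => φ.comp jXG)
    (hgrad : ∀ v, fderiv ℝ E z v = jHG (jYH (M z)) (jXG v)) (hz : fderiv ℝ E z = 0) :
    jYH (M z) = 0 :=
  hjHG <| hTransInj <| ContinuousLinearMap.ext fun v ↦ by simp [← hgrad, hz]

theorem norm_gradient_sub_sub_le {x y : X} (A : G →L[ℝ] H) {ε : ℝ}
    (hM : ∀ z ∈ [x -[ℝ] y], DifferentiableAt ℝ M z)
    (hExt : ∀ z ∈ [x -[ℝ] y], ∀ v, M₁ z (jXG v) = jYH (fderiv ℝ M z v))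
    (hclose : ∀ z ∈ [x -[ℝ] y], ‖M₁ z - A‖ ≤ ε) :
    ‖jYH (M y) - jYH (M x) - A (jXG (y - x))‖ ≤ ε * ‖jXG (y - x)‖ :=
  norm_image_sub_sub_le_of_norm_fderiv_apply_sub_le_segment
    (f' := fun z ↦ jYH ∘L fderiv ℝ M z)
    (fun z hz ↦ jYH.hasFDerivAt.comp z (hM z hz).hasFDerivAt)
    (fun z hz ↦ by
      simpa [← hExt z hz] using (M₁ z - A).le_opNorm (jXG (y - x)) |>.trans
        (mul_le_mul_of_nonneg_right (hclose z hz) (norm_nonneg _)))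

theorem abs_sub_le_of_norm_gradient_le {x y : X} {R : ℝ}
    (hE : ∀ z ∈ [x -[ℝ] y], DifferentiableAt ℝ E z)
    (hgrad : ∀ z ∈ [x -[ℝ] y], ∀ v, fderiv ℝ E z v = jHG (jYH (M z)) (jXG v))
    (hR : ∀ z ∈ [x -[ℝ] y], ‖jYH (M z)‖ ≤ R) :
    |E y - E x| ≤ ‖jHG‖ * R * ‖jXG (y - x)‖ := by
  simpa only [sub_zero, Real.norm_eq_abs] using
    norm_image_sub_sub_le_of_norm_fderiv_apply_sub_le_segment (w := 0)
    (C := ‖jHG‖ * R * ‖jXG (y - x)‖)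
    (fun z hz ↦ (hE z hz).hasFDerivAt)
    (fun z hz ↦ by
      rw [hgrad z hz, sub_zero]
      calc ‖jHG (jYH (M z)) (jXG (y - x))‖
          ≤ ‖jHG‖ * ‖jYH (M z)‖ * ‖jXG (y - x)‖ := (jHG _).le_of_opNorm_le (jHG.le_opNorm _) _
        _ ≤ ‖jHG‖ * R * ‖jXG (y - x)‖ := by gcongr; exact hR z hz)

theorem abs_sub_le_mul_sq_of_gradient_eq_zero {x y : X} {B : ℝ}
    (hE : ∀ z ∈ [x -[ℝ] y], DifferentiableAt ℝ E z)
    (hgrad : ∀ z ∈ [x -[ℝ] y], ∀ v, fderiv ℝ E z v = jHG (jYH (M z)) (jXG v))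
    (hM : ∀ z ∈ [x -[ℝ] y], DifferentiableAt ℝ M z)
    (hExt : ∀ z ∈ [x -[ℝ] y], ∀ v, M₁ z (jXG v) = jYH (fderiv ℝ M z v))
    (hB : ∀ z ∈ [x -[ℝ] y], ‖M₁ z‖ ≤ B) (hx : jYH (M x) = 0) :
    |E y - E x| ≤ ‖jHG‖ * B * ‖jXG (y - x)‖ ^ 2 := by
  have hB₀ : 0 ≤ B := (norm_nonneg _).trans (hB x (left_mem_segment ℝ x y))
  have hR : ∀ z ∈ [x -[ℝ] y], ‖jYH (M z)‖ ≤ B * ‖jXG (y - x)‖ := by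
    intro z hz
    have hsub : [x -[ℝ] z] ⊆ [x -[ℝ] y] :=
      (convex_segment x y).segment_subset (left_mem_segment ℝ x y) hz
    obtain ⟨θ, hθ, rfl⟩ := segment_eq_image' ℝ x y ▸ hz
    have := norm_gradient_sub_sub_le 0 (fun w hw ↦ hM w (hsub hw))
      (fun w hw ↦ hExt w (hsub hw)) (fun w hw ↦ by simpa using hB w (hsub hw))
    simp only [hx, sub_zero, zero_apply, smul_zero, add_sub_cancel_left,
      map_smul, norm_smul, Real.norm_of_nonneg hθ.1] at this
    exact this.trans (mul_le_mul_of_nonneg_left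
      (mul_le_of_le_one_left (norm_nonneg _) hθ.2) hB₀)
  simpa [pow_two, mul_assoc] using abs_sub_le_of_norm_gradient_le hE hgrad hR

theorem half_mul_norm_le_norm_gradient_and_abs_sub_le {U : Set X} (hU : IsOpen U)
    (hE : DifferentiableOn ℝ E U) (hM : DifferentiableOn ℝ M U)
    (hgrad : ∀ z ∈ U, ∀ v, fderiv ℝ E z v = jHG (jYH (M z)) (jXG v))
    (hExt : ∀ z ∈ U, ∀ v, M₁ z (jXG v) = jYH (fderiv ℝ M z v))
    {c x : X} (hseg : [c -[ℝ] x] ⊆ U) (hc : jYH (M c) = 0) (A : G →L[ℝ] H) {μ : ℝ}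
    (hA : μ * ‖jXG (x - c)‖ ≤ ‖A (jXG (x - c))‖)
    (hclose : ∀ z ∈ [c -[ℝ] x], ‖M₁ z - A‖ ≤ μ / 2) :
    μ / 2 * ‖jXG (x - c)‖ ≤ ‖jYH (M x)‖ ∧
      |E x - E c| ≤ ‖jHG‖ * (‖A‖ + μ / 2) * ‖jXG (x - c)‖ ^ 2 := by
  have hEdiff z (hz : z ∈ [c -[ℝ] x]) := (hE z (hseg hz)).differentiableAt (hU.mem_nhds (hseg hz))
  have hMdiff z (hz : z ∈ [c -[ℝ] x]) := (hM z (hseg hz)).differentiableAt (hU.mem_nhds (hseg hz))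
  constructor
  · have hnear := norm_gradient_sub_sub_le A hMdiff (fun z hz ↦ hExt z (hseg hz)) hclose
    rw [hc, sub_zero] at hnear
    linarith [norm_sub_norm_le (A (jXG (x - c))) (jYH (M x)),
      norm_sub_rev (jYH (M x)) (A (jXG (x - c)))]
  · refine abs_sub_le_mul_sq_of_gradient_eq_zero hEdiff (fun z hz ↦ hgrad z (hseg hz)) hMdiff
      (fun z hz ↦ hExt z (hseg hz)) (fun z hz ↦ ?_) hc
    linarith [norm_le_norm_add_norm_sub' (M₁ z) A, hclose z hz]

end GradientMap

theorem lojasiewicz_simon_gradient_inequality_morse_bott_general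
    {X G Y H : Type*}
    [NormedAddCommGroup X] [NormedSpace ℝ X] [CompleteSpace X]
    [NormedAddCommGroup G] [NormedSpace ℝ G] [CompleteSpace G]
    [NormedAddCommGroup Y] [NormedSpace ℝ Y]
    [NormedAddCommGroup H] [NormedSpace ℝ H] [CompleteSpace H]
    -- continuous embeddings X ⊂ G, Y ⊂ H, H ⊂ G*
    (jXG : X →L[ℝ] G)
    (jYH : Y →L[ℝ] H)
    (jHG : H →L[ℝ] (G →L[ℝ] ℝ)) (hjHG : Function.Injective jHG)
    -- the embedding G* ⊂ X* is the transpose of X ⊂ G (and is injective)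
    (hTransInj : Function.Injective fun φ : G →L[ℝ] ℝ => φ.comp jXG)
    -- open convex domain
    {U : Set X} (hUopen : IsOpen U)
    -- E is C² on U with critical point xinf ∈ U
    (E : X → ℝ) (hE : ContDiffOn ℝ 2 E U)
    (xinf : X) (hxinf : xinf ∈ U)
    -- M is a C¹ gradient map for E (M x regarded in X* via Y ⊂ H ⊂ G* ⊂ X*)
    (M : X → Y) (hM : ContDiffOn ℝ 1 M U)
    (hgrad : ∀ x ∈ U, ∀ v : X, fderiv ℝ E x v = jHG (jYH (M x)) (jXG v))
    -- E is Morse–Bott at xinf in the straightened sense: Crit E ∩ U = (xinf + K) ∩ U,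
    -- where K = ker E''(xinf)
    (hMB : ∀ x ∈ U, fderiv ℝ E x = 0 ↔
      x - xinf ∈ LinearMap.ker ((fderiv ℝ (fderiv ℝ E) xinf : X →L[ℝ] (X →L[ℝ] ℝ)) : X →ₗ[ℝ] (X →L[ℝ] ℝ)))
    -- (i): each M'(x) extends to a bounded operator M₁(x) : G → H,
    -- continuously in x in the operator norm
    (M₁ : X → (G →L[ℝ] H))
    (hExt : ∀ x ∈ U, ∀ v : X, M₁ x (jXG v) = jYH (fderiv ℝ M x v))
    (hM₁cont : ContinuousOn M₁ U)
    -- (ii): K has a closed complement X₀ in X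
    (X₀ : Submodule ℝ X) (hX₀closed : IsClosed (X₀ : Set X))
    (hX₀compl : IsCompl (LinearMap.ker ((fderiv ℝ (fderiv ℝ E) xinf : X →L[ℝ] (X →L[ℝ] ℝ)) : X →ₗ[ℝ] (X →L[ℝ] ℝ))) X₀)
    -- (iii): ker M₁(xinf) has a closed complement G₀ in G with X₀ ⊂ G₀
    (G₀ : Submodule ℝ G) (hG₀closed : IsClosed (G₀ : Set G))
    (hG₀compl : IsCompl (LinearMap.ker ((M₁ xinf : G →L[ℝ] H) : G →ₗ[ℝ] H)) G₀)
    (hX₀G₀ : ∀ v ∈ X₀, jXG v ∈ G₀)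
    -- (iv): the range of M₁(xinf) is closed in H
    (hRange : IsClosed ((LinearMap.range ((M₁ xinf : G →L[ℝ] H) : G →ₗ[ℝ] H)) : Set H)) :
    ∃ Z : ℝ, 0 < Z ∧ ∃ σ ∈ Ioc (0 : ℝ) 1, ∀ x ∈ U, ‖x - xinf‖ < σ →
      ‖jYH (M x)‖ ≥ Z * Real.sqrt |E x - E xinf| := by
  obtain ⟨μ, hμ, hμG₀⟩ :=
    (M₁ xinf).exists_pos_mul_norm_le_of_isCompl_ker hG₀closed hG₀compl hRange
  obtain ⟨δ, hδ, hδU, hδM₁⟩ :=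
    hM₁cont.exists_ball_subset_forall_norm_sub_le hUopen hxinf (half_pos hμ)
  obtain ⟨C, hC, hsplit⟩ := Submodule.exists_add_eq_norm_le_of_isCompl hX₀compl
    (ContinuousLinearMap.isClosed_ker _) hX₀closed
  set D := ‖jHG‖ * (‖M₁ xinf‖ + μ / 2)
  refine ⟨μ / 2 / √(D + 1), by positivity, min 1 (δ / (C + 1)),
    ⟨by positivity, min_le_left _ _⟩, fun x _ hxσ ↦ ?_⟩
  obtain ⟨k, hk, ξ, hξ, hkξ, hkC⟩ := hsplit (x - xinf)
  have hxδ : (C + 1) * ‖x - xinf‖ < δ :=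
    (lt_div_iff₀' (by positivity)).1 (hxσ.trans_le (min_le_right _ _))
  have hkball : xinf + k ∈ Metric.ball xinf δ := by
    simpa using hkC.trans_lt (by nlinarith [norm_nonneg (x - xinf)])
  have hxball : x ∈ Metric.ball xinf δ := by
    rw [mem_ball_iff_norm]; nlinarith [norm_nonneg (x - xinf)]
  have hsegk := (convex_ball xinf δ).segment_subset (Metric.mem_ball_self hδ) hkball
  have hsegx := (convex_ball xinf δ).segment_subset hkball hxball
  have hcritk : ∀ z ∈ [xinf -[ℝ] xinf + k], fderiv ℝ E z = 0 := fun z hz ↦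
    (hMB z (hδU (hsegk hz))).2 (Submodule.sub_mem_of_mem_segment_add hk hz)
  have hEk : E (xinf + k) = E xinf := eq_of_forall_mem_segment_fderiv_eq_zero
    (fun z hz ↦ (hE.contDiffAt (hUopen.mem_nhds (hδU (hsegk hz)))).differentiableAt two_ne_zero)
    hcritk
  have hxk : x - (xinf + k) = ξ := by rw [sub_add_eq_sub_sub, ← hkξ, add_sub_cancel_left]
  obtain ⟨hlower, henergy⟩ := half_mul_norm_le_norm_gradient_and_abs_sub_le hUopen
    (hE.differentiableOn two_ne_zero) (hM.differentiableOn one_ne_zero) hgrad hExt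
    (hsegx.trans hδU) (gradient_eq_zero_of_fderiv_eq_zero hjHG hTransInj
      (hgrad _ (hδU hkball)) (hcritk _ (right_mem_segment _ _ _)))
    (M₁ xinf) (hxk ▸ hμG₀ _ (hX₀G₀ ξ hξ)) (fun z hz ↦ hδM₁ z (hsegx hz))
  rw [hxk] at hlower henergy
  rw [hEk] at henergy
  exact div_sqrt_mul_sqrt_abs_le_of_le_mul_of_abs_le_mul_sq (by positivity) (by positivity)
    (norm_nonneg _) hlower henergy

/-- **Optimal Łojasiewicz–Simon gradient inequality for C² Morse–Bott functions on Banach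
spaces** (Theorem 3 of the paper, straightened form).  `X, G, Y, H` are real Banach spaces with
continuous embeddings `X ⊂ G` (via `jXG`) and `Y ⊂ H ⊂ G* ⊂ X*` (via `jYH`, `jHG`, and the
transpose of `jXG`, respectively).  `U ⊂ X` is open and convex, `E : U → ℝ` is `C²` with critical
point `xinf`, and `M : U → Y` is a `C¹` gradient map for `E`.  `E` is Morse–Bott at `xinf` in the
straightened sense that `Crit E ∩ U = (xinf + K) ∩ U` where `K = ker E''(xinf)`.  Each `M'(x)`
admits a bounded extension `M₁(x) : G → H` depending continuously on `x` in the operator norm,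
`K` has a closed complement `X₀` in `X`, `ker M₁(xinf)` has a closed complement `G₀ ⊇ X₀` in `G`,
and `ran M₁(xinf)` is closed in `H`.  Then `‖M(x)‖_H ≥ Z |E(x) − E(xinf)|^{1/2}` for all `x ∈ U`
with `‖x − xinf‖_X < σ`. -/
theorem lojasiewicz_simon_gradient_inequality_morse_bott
    {X G Y H : Type*}
    [NormedAddCommGroup X] [NormedSpace ℝ X] [CompleteSpace X]
    [NormedAddCommGroup G] [NormedSpace ℝ G] [CompleteSpace G]
    [NormedAddCommGroup Y] [NormedSpace ℝ Y] [CompleteSpace Y]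
    [NormedAddCommGroup H] [NormedSpace ℝ H] [CompleteSpace H]
    -- continuous embeddings X ⊂ G, Y ⊂ H, H ⊂ G*
    (jXG : X →L[ℝ] G) (hjXG : Function.Injective jXG)
    (jYH : Y →L[ℝ] H) (hjYH : Function.Injective jYH)
    (jHG : H →L[ℝ] (G →L[ℝ] ℝ)) (hjHG : Function.Injective jHG)
    -- the embedding G* ⊂ X* is the transpose of X ⊂ G (and is injective)
    (hTransInj : Function.Injective fun φ : G →L[ℝ] ℝ => φ.comp jXG)
    -- open convex domain
    {U : Set X} (hUopen : IsOpen U) (hUconv : Convex ℝ U)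
    -- E is C² on U with critical point xinf ∈ U
    (E : X → ℝ) (hE : ContDiffOn ℝ 2 E U)
    (xinf : X) (hxinf : xinf ∈ U) (hcrit : fderiv ℝ E xinf = 0)
    -- M is a C¹ gradient map for E (M x regarded in X* via Y ⊂ H ⊂ G* ⊂ X*)
    (M : X → Y) (hM : ContDiffOn ℝ 1 M U)
    (hgrad : ∀ x ∈ U, ∀ v : X, fderiv ℝ E x v = jHG (jYH (M x)) (jXG v))
    -- E is Morse–Bott at xinf in the straightened sense: Crit E ∩ U = (xinf + K) ∩ U,
    -- where K = ker E''(xinf)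
    (hMB : ∀ x ∈ U, fderiv ℝ E x = 0 ↔
      x - xinf ∈ LinearMap.ker ((fderiv ℝ (fderiv ℝ E) xinf : X →L[ℝ] (X →L[ℝ] ℝ)) : X →ₗ[ℝ] (X →L[ℝ] ℝ)))
    -- (i): each M'(x) extends to a bounded operator M₁(x) : G → H,
    -- continuously in x in the operator norm
    (M₁ : X → (G →L[ℝ] H))
    (hExt : ∀ x ∈ U, ∀ v : X, M₁ x (jXG v) = jYH (fderiv ℝ M x v))
    (hM₁cont : ContinuousOn M₁ U)
    -- (ii): K has a closed complement X₀ in X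
    (X₀ : Submodule ℝ X) (hX₀closed : IsClosed (X₀ : Set X))
    (hX₀compl : IsCompl (LinearMap.ker ((fderiv ℝ (fderiv ℝ E) xinf : X →L[ℝ] (X →L[ℝ] ℝ)) : X →ₗ[ℝ] (X →L[ℝ] ℝ))) X₀)
    -- (iii): ker M₁(xinf) has a closed complement G₀ in G with X₀ ⊂ G₀
    (G₀ : Submodule ℝ G) (hG₀closed : IsClosed (G₀ : Set G))
    (hG₀compl : IsCompl (LinearMap.ker ((M₁ xinf : G →L[ℝ] H) : G →ₗ[ℝ] H)) G₀)
    (hX₀G₀ : ∀ v ∈ X₀, jXG v ∈ G₀)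
    -- (iv): the range of M₁(xinf) is closed in H
    (hRange : IsClosed ((LinearMap.range ((M₁ xinf : G →L[ℝ] H) : G →ₗ[ℝ] H)) : Set H)) :
    ∃ Z : ℝ, 0 < Z ∧ ∃ σ ∈ Ioc (0 : ℝ) 1, ∀ x ∈ U, ‖x - xinf‖ < σ →
      ‖jYH (M x)‖ ≥ Z * Real.sqrt |E x - E xinf| :=
  lojasiewicz_simon_gradient_inequality_morse_bott_general jXG jYH jHG hjHG hTransInj hUopen E hE
    xinf hxinf M hM hgrad hMB M₁ hExt hM₁cont X₀ hX₀closed hX₀compl G₀ hG₀closed hG₀compl hX₀G₀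
    hRange
end

section
/- Łojasiewicz–Simon gradient inequality for C² Morse–Bott functions, case G = X and H = Y (Corollary 2 of the paper, straightened form). Let X and Y be real Banach spaces with a continuous embedding Y ⊂ X*. Let U ⊂ X be an open convex subset, let E : U → ℝ be a C² function, let x∞ ∈ U be a critical point of E (E'(x∞) = 0), and let M : U → Y be a C¹ gradient map for E. Set K := ker E''(x∞) (the kernel of the bounded operator E''(x∞) : X → X*), and assume E is Morse–Bott at x∞ in the straightened sense that Crit E ∩ U = (x∞ + K) ∩ U. Assume that K has a closed complement in X and that the range of M'(x∞) : X → Y is a closed subspace of Y. Then there exist constants Z > 0 and σ ∈ (0,1] such that every x ∈ U with ‖x − x∞‖_X < σ satisfies ‖M(x)‖_Y ≥ Z · |E(x) − E(x∞)|^{1/2}. -/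
/-!
Since `M` is a gradient map, `E''(xinf) = jY ∘ M'(xinf)`, so `K = ker M'(xinf)`, and by the open
mapping theorem `M'(xinf)` is bounded below on the closed complement `X₀`. Split
`x - xinf = k + ξ` with `k ∈ K`, `ξ ∈ X₀` along the continuous projection and put `y = xinf + k`.
By the Morse–Bott hypothesis `E'` vanishes on `xinf + K` near `xinf`, so `M y = 0` and
`E y = E xinf`. Near `xinf` the derivative `M'` stays close to `M'(xinf)`, which gives
`‖M x‖ ≳ ‖ξ‖`, while `‖E' z‖ ≤ ‖jY‖ ‖M z‖ ≲ ‖z - y‖` gives `|E x - E y| ≲ ‖ξ‖²`.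
-/

open Set Filter Topology Metric

section MeanValue

variable {X F : Type*} [NormedAddCommGroup X] [NormedSpace ℝ X]
  [NormedAddCommGroup F] [NormedSpace ℝ F] {f : X → F} {s : Set X} {x y : X}

theorem Convex.apply_eq_of_fderiv_eq_zero (hs : Convex ℝ s)
    (hf : ∀ z ∈ s, DifferentiableAt ℝ f z) (hf' : ∀ z ∈ s, fderiv ℝ f z = 0)
    (hx : x ∈ s) (hy : y ∈ s) : f y = f x := by
  have h := hs.norm_image_sub_le_of_norm_fderiv_le (C := 0) hf
    (fun z hz => by simp [hf' z hz]) hx hy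
  rwa [zero_mul, norm_le_zero_iff, sub_eq_zero] at h

theorem Convex.apply_eq_of_fderiv_eq_zero_of_sub_mem (K : Submodule ℝ X) (hs : Convex ℝ s)
    (hf : ∀ z ∈ s, DifferentiableAt ℝ f z) (hf' : ∀ z ∈ s, z - x ∈ K → fderiv ℝ f z = 0)
    (hx : x ∈ s) (hy : y ∈ s) (hyx : y - x ∈ K) : f y = f x :=
  (hs.inter (AffineSubspace.mk' x K).convex).apply_eq_of_fderiv_eq_zero
    (fun z hz => hf z hz.1) (fun z hz => hf' z hz.1 (AffineSubspace.mem_mk'.1 hz.2))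
    ⟨hx, AffineSubspace.self_mem_mk' x K⟩ ⟨hy, AffineSubspace.mem_mk'.2 hyx⟩

theorem Convex.norm_image_sub_le_mul_sq (hs : Convex ℝ s)
    (hf : ∀ z ∈ s, DifferentiableAt ℝ f z) {L : ℝ} (hL : 0 ≤ L)
    (bound : ∀ z ∈ s, ‖fderiv ℝ f z‖ ≤ L * ‖z - y‖) (hy : y ∈ s) (hx : x ∈ s) :
    ‖f x - f y‖ ≤ L * ‖x - y‖ ^ 2 := by
  have hseg : segment ℝ y x ⊆ s := hs.segment_subset hy hx
  have bound_seg : ∀ z ∈ segment ℝ y x, ‖fderiv ℝ f z‖ ≤ L * ‖x - y‖ := fun z hz => by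
    have hzy : ‖z - y‖ ≤ ‖x - y‖ := by
      simpa [dist_eq_norm, norm_sub_rev y x] using segment_subset_closedBall_left y x hz
    exact (bound z (hseg hz)).trans (by gcongr)
  calc ‖f x - f y‖ ≤ L * ‖x - y‖ * ‖x - y‖ :=
        (convex_segment y x).norm_image_sub_le_of_norm_fderiv_le (fun z hz => hf z (hseg hz))
          bound_seg (left_mem_segment ℝ y x) (right_mem_segment ℝ y x)
    _ = L * ‖x - y‖ ^ 2 := by ring

theorem Convex.mul_norm_sub_le_norm_image_sub {M : X → F} {A : X →L[ℝ] F} {c : ℝ}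
    (hs : Convex ℝ s) (hM : ∀ z ∈ s, DifferentiableAt ℝ M z)
    (bound : ∀ z ∈ s, ‖fderiv ℝ M z - A‖ ≤ c / 2) (hy : y ∈ s) (hx : x ∈ s)
    (hA : c * ‖x - y‖ ≤ ‖A (x - y)‖) : c / 2 * ‖x - y‖ ≤ ‖M x - M y‖ := by
  have hlin := hs.norm_image_sub_le_of_norm_fderiv_le' hM bound hy hx
  have htri := norm_le_insert' (A (x - y)) (M x - M y)
  rw [norm_sub_rev (A (x - y))] at htri
  linarith

end MeanValue

section Gradient

variable {X Y : Type*} [NormedAddCommGroup X] [NormedSpace ℝ X]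
  [NormedAddCommGroup Y] [NormedSpace ℝ Y] (jY : Y →L[ℝ] (X →L[ℝ] ℝ)) {E : X → ℝ} {M : X → Y}

theorem ker_fderiv_fderiv_eq_ker_fderiv_of_gradient (hjY : Function.Injective jY) {x : X}
    (hgrad : fderiv ℝ E =ᶠ[𝓝 x] fun z => jY (M z)) (hM : DifferentiableAt ℝ M x) :
    (fderiv ℝ (fderiv ℝ E) x).ker = (fderiv ℝ M x).ker := by
  have hcomp : fderiv ℝ (fderiv ℝ E) x = jY ∘L fderiv ℝ M x := by
    rw [hgrad.fderiv_eq]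
    exact (jY.hasFDerivAt.comp x hM.hasFDerivAt).fderiv
  ext v
  simp [hcomp, map_eq_zero_iff jY hjY]

theorem Convex.abs_sub_le_mul_norm_gradient_sq {s : Set X} {x y : X} {A : X →L[ℝ] Y} {c : ℝ}
    (hc : 0 < c) (hs : Convex ℝ s) (hE : ∀ z ∈ s, DifferentiableAt ℝ E z)
    (hM : ∀ z ∈ s, DifferentiableAt ℝ M z) (hgrad : ∀ z ∈ s, fderiv ℝ E z = jY (M z))
    (bound : ∀ z ∈ s, ‖fderiv ℝ M z - A‖ ≤ c / 2) (hy : y ∈ s) (hMy : M y = 0) (hx : x ∈ s)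
    (hA : c * ‖x - y‖ ≤ ‖A (x - y)‖) :
    |E x - E y| ≤ ‖jY‖ * (‖A‖ + c / 2) * (2 / c) ^ 2 * ‖M x‖ ^ 2 := by
  have hM_lip : ∀ z ∈ s, ‖M z‖ ≤ (‖A‖ + c / 2) * ‖z - y‖ := fun z hz => by
    have hM' : ∀ w ∈ s, ‖fderiv ℝ M w‖ ≤ ‖A‖ + c / 2 := fun w hw =>
      (norm_le_insert' _ A).trans (by gcongr; exact bound w hw)
    simpa [hMy] using hs.norm_image_sub_le_of_norm_fderiv_le hM hM' hy hz
  have hE' : ∀ z ∈ s, ‖fderiv ℝ E z‖ ≤ ‖jY‖ * (‖A‖ + c / 2) * ‖z - y‖ := fun z hz => by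
    rw [hgrad z hz, mul_assoc]
    exact (jY.le_opNorm _).trans (by gcongr; exact hM_lip z hz)
  have hquad : |E x - E y| ≤ ‖jY‖ * (‖A‖ + c / 2) * ‖x - y‖ ^ 2 :=
    hs.norm_image_sub_le_mul_sq hE (by positivity) hE' hy hx
  have hlow : ‖x - y‖ ≤ 2 / c * ‖M x‖ := by
    have h := hs.mul_norm_sub_le_norm_image_sub hM bound hy hx hA
    rw [hMy, sub_zero] at h
    rw [div_mul_eq_mul_div, le_div_iff₀ hc]
    linarith
  calc |E x - E y| ≤ ‖jY‖ * (‖A‖ + c / 2) * ‖x - y‖ ^ 2 := hquad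
    _ ≤ ‖jY‖ * (‖A‖ + c / 2) * (2 / c * ‖M x‖) ^ 2 := by gcongr
    _ = ‖jY‖ * (‖A‖ + c / 2) * (2 / c) ^ 2 * ‖M x‖ ^ 2 := by ring

end Gradient

theorem ContinuousLinearMap.exists_pos_mul_norm_le_of_isCompl_ker_s1 {X Y : Type*}
    [NormedAddCommGroup X] [NormedSpace ℝ X] [CompleteSpace X]
    [NormedAddCommGroup Y] [NormedSpace ℝ Y] [CompleteSpace Y]
    (A : X →L[ℝ] Y) (hA : IsClosed (A.range : Set Y)) {X₀ : Submodule ℝ X}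
    (hX₀ : IsClosed (X₀ : Set X)) (h : IsCompl A.ker X₀) :
    ∃ c > 0, ∀ ξ ∈ X₀, c * ‖ξ‖ ≤ ‖A ξ‖ := by
  have : CompleteSpace X₀ := hX₀.completeSpace_coe
  have hinj : Function.Injective (A ∘L X₀.subtypeL) := by
    refine (injective_iff_map_eq_zero _).2 fun ξ hξ => Subtype.ext ?_
    exact Submodule.disjoint_def.1 h.disjoint ξ hξ ξ.2
  have hrange : Set.range (A ∘L X₀.subtypeL) = A.range := by
    ext w
    refine ⟨fun ⟨ξ, hξ⟩ => ⟨ξ, hξ⟩, fun ⟨v, hv⟩ => ?_⟩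
    obtain ⟨k, hk, ξ, hξ, rfl⟩ := Submodule.mem_sup.1 (h.sup_eq_top ▸ Submodule.mem_top : v ∈ _)
    have hAk : A k = 0 := hk
    exact ⟨⟨ξ, hξ⟩, by simpa [hAk] using hv⟩
  obtain ⟨c, hc, hbound⟩ := antilipschitzWith_iff_exists_mul_le_norm.1
    ((A ∘L X₀.subtypeL).antilipschitz_of_injective_of_isClosed_range hinj (hrange ▸ hA))
  exact ⟨c, hc, fun ξ hξ => hbound ⟨ξ, hξ⟩⟩

theorem exists_mem_Ioc_forall_norm_sub_lt_of_eventually {X : Type*} [SeminormedAddCommGroup X]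
    {p : X → Prop} {a : X} (h : ∀ᶠ x in 𝓝 a, p x) :
    ∃ σ ∈ Ioc (0 : ℝ) 1, ∀ x, ‖x - a‖ < σ → p x := by
  obtain ⟨r, hr, hp⟩ := Metric.eventually_nhds_iff_ball.1 h
  exact ⟨min r 1, ⟨by positivity, min_le_right _ _⟩,
    fun x hx => hp x (mem_ball_iff_norm.2 (hx.trans_le (min_le_left _ _)))⟩

theorem inv_sqrt_add_one_mul_sqrt_le {a b L : ℝ} (hL : 0 ≤ L) (hb : 0 ≤ b)
    (h : a ≤ L * b ^ 2) : (√L + 1)⁻¹ * √a ≤ b := by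
  have hsqrt : √a ≤ √L * b := by
    simpa [Real.sqrt_mul hL, Real.sqrt_sq hb] using Real.sqrt_le_sqrt h
  rw [inv_mul_le_iff₀ (by positivity)]
  nlinarith [Real.sqrt_nonneg L]

theorem eventually_abs_sub_le_mul_norm_sq_of_morseBott {X Y : Type*}
    [NormedAddCommGroup X] [NormedSpace ℝ X] [CompleteSpace X]
    [NormedAddCommGroup Y] [NormedSpace ℝ Y] [CompleteSpace Y]
    (jY : Y →L[ℝ] (X →L[ℝ] ℝ)) (hjY : Function.Injective jY) {U : Set X} (hU : IsOpen U)
    {E : X → ℝ} {M : X → Y} (hE : DifferentiableOn ℝ E U) (hM : ContDiffOn ℝ 1 M U)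
    (hgrad : ∀ z ∈ U, fderiv ℝ E z = jY (M z)) {xinf : X} (hxinf : xinf ∈ U)
    (hMB : ∀ z ∈ U, z - xinf ∈ (fderiv ℝ M xinf).ker → fderiv ℝ E z = 0)
    {X₀ : Submodule ℝ X} (hX₀closed : IsClosed (X₀ : Set X))
    (hX₀compl : IsCompl (fderiv ℝ M xinf).ker X₀)
    (hRange : IsClosed ((fderiv ℝ M xinf).range : Set Y)) :
    ∃ L, 0 ≤ L ∧ ∀ᶠ x in 𝓝 xinf, |E x - E xinf| ≤ L * ‖M x‖ ^ 2 := by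
  set A := fderiv ℝ M xinf
  obtain ⟨c, hc, hAX₀⟩ := A.exists_pos_mul_norm_le_of_isCompl_ker_s1 hRange hX₀closed hX₀compl
  obtain ⟨r, hr, hball⟩ : ∃ r > 0, ∀ z ∈ ball xinf r, z ∈ U ∧ fderiv ℝ M z ∈ closedBall A (c / 2) :=
    Metric.eventually_nhds_iff_ball.1 <| (hU.eventually_mem hxinf).and <|
      ((hM.continuousOn_fderiv_of_isOpen hU le_rfl).continuousAt (hU.mem_nhds hxinf))
        (closedBall_mem_nhds A (by positivity))
  have hEdiff : ∀ z ∈ ball xinf r, DifferentiableAt ℝ E z := fun z hz =>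
    hE.differentiableAt (hU.mem_nhds (hball z hz).1)
  set P := A.ker.projectionL X₀
    (Submodule.IsCompl.isTopCompl_of_isClosed hX₀compl A.isClosed_ker hX₀closed)
  have hy_near : ∀ᶠ x in 𝓝 xinf, xinf + P (x - xinf) ∈ ball xinf r := by
    have hcont : Continuous fun x => xinf + P (x - xinf) := by fun_prop
    exact hcont.continuousAt.eventually_mem (by simpa using ball_mem_nhds xinf hr)
  refine ⟨‖jY‖ * (‖A‖ + c / 2) * (2 / c) ^ 2, by positivity, ?_⟩
  filter_upwards [isOpen_ball.eventually_mem (mem_ball_self hr), hy_near] with x hxr hyr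
  set y := xinf + P (x - xinf)
  have hyK : y - xinf ∈ A.ker := by
    rw [add_sub_cancel_left]
    exact Submodule.projectionL_apply_mem _ _
  have hMy : M y = 0 := hjY <| by
    rw [map_zero, ← hgrad y (hball y hyr).1]
    exact hMB y (hball y hyr).1 hyK
  have hEy : E y = E xinf := (convex_ball xinf r).apply_eq_of_fderiv_eq_zero_of_sub_mem A.ker
    hEdiff (fun z hz => hMB z (hball z hz).1) (mem_ball_self hr) hyr hyK
  have hxy : x - y ∈ X₀ := by
    rw [sub_add_eq_sub_sub, ← Submodule.projectionL_eq_self_sub_projectionL]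
    exact Submodule.projectionL_apply_mem _ _
  rw [← hEy]
  exact (convex_ball xinf r).abs_sub_le_mul_norm_gradient_sq jY hc hEdiff
    (fun z hz => (hM.differentiableOn one_ne_zero).differentiableAt (hU.mem_nhds (hball z hz).1))
    (fun z hz => hgrad z (hball z hz).1) (fun z hz => mem_closedBall_iff_norm.1 (hball z hz).2)
    hyr hMy hxr (hAX₀ _ hxy)

theorem lojasiewicz_simon_gradient_inequality_morse_bott_GisX_general
    {X Y : Type*}
    [NormedAddCommGroup X] [NormedSpace ℝ X] [CompleteSpace X]
    [NormedAddCommGroup Y] [NormedSpace ℝ Y] [CompleteSpace Y]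
    -- continuous embedding Y ⊂ X*
    (jY : Y →L[ℝ] (X →L[ℝ] ℝ)) (hjY : Function.Injective jY)
    -- open convex domain
    {U : Set X} (hUopen : IsOpen U)
    -- E is C² on U with critical point xinf ∈ U
    (E : X → ℝ) (hE : ContDiffOn ℝ 2 E U)
    (xinf : X) (hxinf : xinf ∈ U)
    -- M is a C¹ gradient map for E
    (M : X → Y) (hM : ContDiffOn ℝ 1 M U)
    (hgrad : ∀ x ∈ U, ∀ v : X, fderiv ℝ E x v = jY (M x) v)
    -- E is Morse–Bott at xinf in the straightened sense, K = ker E''(xinf)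
    (hMB : ∀ x ∈ U, fderiv ℝ E x = 0 ↔
      x - xinf ∈ LinearMap.ker (fderiv ℝ (fderiv ℝ E) xinf : X →ₗ[ℝ] (X →L[ℝ] ℝ)))
    -- K has a closed complement X₀ in X
    (X₀ : Submodule ℝ X) (hX₀closed : IsClosed (X₀ : Set X))
    (hX₀compl : IsCompl (LinearMap.ker (fderiv ℝ (fderiv ℝ E) xinf : X →ₗ[ℝ] (X →L[ℝ] ℝ))) X₀)
    -- the range of M'(xinf) : X → Y is closed in Y
    (hRange : IsClosed ((LinearMap.range (fderiv ℝ M xinf : X →ₗ[ℝ] Y)) : Set Y)) :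
    ∃ Z : ℝ, 0 < Z ∧ ∃ σ ∈ Ioc (0 : ℝ) 1, ∀ x ∈ U, ‖x - xinf‖ < σ →
      ‖M x‖ ≥ Z * Real.sqrt |E x - E xinf| := by
  have hgradU : ∀ z ∈ U, fderiv ℝ E z = jY (M z) := fun z hz =>
    ContinuousLinearMap.ext (hgrad z hz)
  have hMxinf : DifferentiableAt ℝ M xinf :=
    (hM.differentiableOn one_ne_zero).differentiableAt (hUopen.mem_nhds hxinf)
  rw [ker_fderiv_fderiv_eq_ker_fderiv_of_gradient jY hjY
    (eventually_of_mem (hUopen.mem_nhds hxinf) hgradU) hMxinf] at hMB hX₀compl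
  obtain ⟨L, hL, hnear⟩ := eventually_abs_sub_le_mul_norm_sq_of_morseBott jY hjY hUopen
    (hE.differentiableOn two_ne_zero) hM hgradU hxinf (fun z hz => (hMB z hz).2)
    hX₀closed hX₀compl hRange
  obtain ⟨σ, hσ, hσx⟩ := exists_mem_Ioc_forall_norm_sub_lt_of_eventually hnear
  exact ⟨(√L + 1)⁻¹, by positivity, σ, hσ, fun x _ hx =>
    inv_sqrt_add_one_mul_sqrt_le hL (norm_nonneg _) (hσx x hx)⟩

/-- **Łojasiewicz–Simon gradient inequality for C² Morse–Bott functions, case `G = X`,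
`H = Y`** (Corollary 2 of the paper, straightened form).  `X` and `Y` are real Banach spaces
with a continuous embedding `Y ⊂ X*` (via `jY`), `U ⊂ X` is open and convex, `E : U → ℝ` is
`C²` with critical point `xinf ∈ U`, and `M : U → Y` is a `C¹` gradient map for `E`.  `E` is
Morse–Bott at `xinf` in the straightened sense `Crit E ∩ U = (xinf + K) ∩ U` with
`K = ker E''(xinf)`, `K` has a closed complement in `X`, and `ran M'(xinf)` is closed in `Y`.
Then `‖M(x)‖_Y ≥ Z |E(x) − E(xinf)|^{1/2}` for all `x ∈ U` with `‖x − xinf‖_X < σ`. -/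
theorem lojasiewicz_simon_gradient_inequality_morse_bott_GisX
    {X Y : Type*}
    [NormedAddCommGroup X] [NormedSpace ℝ X] [CompleteSpace X]
    [NormedAddCommGroup Y] [NormedSpace ℝ Y] [CompleteSpace Y]
    -- continuous embedding Y ⊂ X*
    (jY : Y →L[ℝ] (X →L[ℝ] ℝ)) (hjY : Function.Injective jY)
    -- open convex domain
    {U : Set X} (hUopen : IsOpen U) (hUconv : Convex ℝ U)
    -- E is C² on U with critical point xinf ∈ U
    (E : X → ℝ) (hE : ContDiffOn ℝ 2 E U)
    (xinf : X) (hxinf : xinf ∈ U) (hcrit : fderiv ℝ E xinf = 0)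
    -- M is a C¹ gradient map for E
    (M : X → Y) (hM : ContDiffOn ℝ 1 M U)
    (hgrad : ∀ x ∈ U, ∀ v : X, fderiv ℝ E x v = jY (M x) v)
    -- E is Morse–Bott at xinf in the straightened sense, K = ker E''(xinf)
    (hMB : ∀ x ∈ U, fderiv ℝ E x = 0 ↔
      x - xinf ∈ LinearMap.ker (fderiv ℝ (fderiv ℝ E) xinf : X →ₗ[ℝ] (X →L[ℝ] ℝ)))
    -- K has a closed complement X₀ in X
    (X₀ : Submodule ℝ X) (hX₀closed : IsClosed (X₀ : Set X))
    (hX₀compl : IsCompl (LinearMap.ker (fderiv ℝ (fderiv ℝ E) xinf : X →ₗ[ℝ] (X →L[ℝ] ℝ))) X₀)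
    -- the range of M'(xinf) : X → Y is closed in Y
    (hRange : IsClosed ((LinearMap.range (fderiv ℝ M xinf : X →ₗ[ℝ] Y)) : Set Y)) :
    ∃ Z : ℝ, 0 < Z ∧ ∃ σ ∈ Ioc (0 : ℝ) 1, ∀ x ∈ U, ‖x - xinf‖ < σ →
      ‖M x‖ ≥ Z * Real.sqrt |E x - E xinf| :=
  lojasiewicz_simon_gradient_inequality_morse_bott_GisX_general jY hjY hUopen E hE xinf hxinf M hM
    hgrad hMB X₀ hX₀closed hX₀compl hRange
end

section
/- Energy upper bound in the proof of the Morse–Bott Łojasiewicz–Simon theorem. Let X, G, Y, H be real Banach spaces with continuous embeddings X ⊂ G and Y ⊂ H ⊂ G* ⊂ X*, where the embedding G* ⊂ X* is the transpose (adjoint) of the embedding X ⊂ G. Let U ⊂ X be an open convex neighborhood of 0, let E : U → ℝ be a C² function, and let M : U → Y be a C¹ gradient map for E. Let K ⊂ X be a closed subspace and suppose that E(k) = 0 and E'(k) = 0 for every k ∈ U ∩ K. Assume that for each x ∈ U the bounded operator M'(x) : X → Y admits a bounded extension M₁(x) : G → H (compatible with the embeddings as above), and that the map U ∋ x ↦ M₁(x)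 ∈ L(G,H) is continuous in the operator norm. Then there exist constants C₁ ≥ 1 and δ ∈ (0,1] such that for every ξ ∈ X and every k ∈ U ∩ K with ‖ξ‖_X ≤ δ, ‖k‖_X ≤ δ, and ξ + k ∈ U, one has |E(ξ + k)| ≤ C₁ ‖ξ‖_G². -/
/-!
Along the segment `t ↦ k + t • ξ` the energy `g t = E (k + t • ξ)` has `g 0 = 0` and
`g' 0 = E'(k) ξ = 0`, while `g'' t = E''(k + t • ξ)(ξ, ξ) = ⟨ξ, M₁(k + t • ξ) ξ⟩` only sees `ξ`
through its image in `G`. Continuity of `M₁` bounds `‖M₁‖` near `0`, so two mean value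
inequalities give `|g 1| ≤ ‖jHG‖ sup ‖M₁‖ ‖ξ‖_G²`.
-/

open Set Metric

theorem norm_image_sub_le_of_deriv_zero_of_norm_deriv2_le_segment_01
    {F : Type*} [NormedAddCommGroup F] [NormedSpace ℝ F] {f f' f'' : ℝ → F} {C : ℝ}
    (hf : ∀ t ∈ Icc (0 : ℝ) 1, HasDerivWithinAt f (f' t) (Icc 0 1) t)
    (hf' : ∀ t ∈ Icc (0 : ℝ) 1, HasDerivWithinAt f' (f'' t) (Icc 0 1) t)
    (hf'0 : f' 0 = 0) (bound : ∀ t ∈ Ico (0 : ℝ) 1, ‖f'' t‖ ≤ C) :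
    ‖f 1 - f 0‖ ≤ C := by
  have hC : 0 ≤ C := (norm_nonneg _).trans (bound 0 ⟨le_rfl, zero_lt_one⟩)
  refine norm_image_sub_le_of_norm_deriv_le_segment_01' hf fun t ht => ?_
  have h := norm_image_sub_le_of_norm_deriv_le_segment' hf' bound t (Ico_subset_Icc_self ht)
  rw [hf'0, sub_zero, sub_zero] at h
  exact h.trans (mul_le_of_le_one_right hC ht.2.le)

theorem HasFDerivAt.hasDerivAt_comp_add_smul
    {𝕜 E F : Type*} [NontriviallyNormedField 𝕜]
    [NormedAddCommGroup E] [NormedSpace 𝕜 E] [NormedAddCommGroup F] [NormedSpace 𝕜 F]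
    {f : E → F} {f' : E →L[𝕜] F} {x v : E} {t : 𝕜} (hf : HasFDerivAt f f' (x + t • v)) :
    HasDerivAt (fun s : 𝕜 => f (x + s • v)) (f' v) t := by
  simpa [Function.comp_def] using hf.comp_hasDerivAt t (((hasDerivAt_id t).smul_const v).const_add x)

theorem ContinuousLinearMap.norm_apply_apply_self_le
    {𝕜 G H : Type*} [NontriviallyNormedField 𝕜]
    [NormedAddCommGroup G] [NormedSpace 𝕜 G] [NormedAddCommGroup H] [NormedSpace 𝕜 H]
    (P : H →L[𝕜] G →L[𝕜] 𝕜) (A : G →L[𝕜] H) (g : G) :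
    ‖P (A g) g‖ ≤ ‖P‖ * ‖A‖ * ‖g‖ ^ 2 :=
  calc ‖P (A g) g‖ ≤ ‖P‖ * ‖A g‖ * ‖g‖ := P.le_opNorm₂ _ _
    _ ≤ ‖P‖ * (‖A‖ * ‖g‖) * ‖g‖ := by gcongr; exact A.le_opNorm g
    _ = ‖P‖ * ‖A‖ * ‖g‖ ^ 2 := by ring

theorem ContinuousWithinAt.exists_ball_subset_norm_le
    {X F : Type*} [PseudoMetricSpace X] [SeminormedAddGroup F]
    {f : X → F} {U : Set X} {x : X} (hU : U ∈ nhds x) (hf : ContinuousWithinAt f U x) :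
    ∃ r > 0, ∃ C, ball x r ⊆ U ∧ ∀ y ∈ ball x r, ‖f y‖ ≤ C := by
  have hbdd : ∀ᶠ y in nhds x, ‖f y‖ < ‖f x‖ + 1 :=
    (hf.continuousAt hU).norm.eventually (gt_mem_nhds (lt_add_one _))
  obtain ⟨r, hr, hball⟩ := eventually_nhds_iff_ball.mp (hbdd.and hU)
  exact ⟨r, hr, ‖f x‖ + 1, fun y hy => (hball y hy).2, fun y hy => (hball y hy).1.le⟩

theorem add_smul_mem_ball_zero {X : Type*} [SeminormedAddCommGroup X] [NormedSpace ℝ X]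
    {x v : X} {r t : ℝ} (ht : t ∈ Icc (0 : ℝ) 1) (h : ‖x‖ + ‖v‖ < r) : x + t • v ∈ ball 0 r := by
  rw [mem_ball_zero_iff]
  calc ‖x + t • v‖ ≤ ‖x‖ + t * ‖v‖ := by
        simpa [norm_smul, abs_of_nonneg ht.1] using norm_add_le x (t • v)
    _ ≤ ‖x‖ + ‖v‖ := by gcongr; exact mul_le_of_le_one_left (norm_nonneg v) ht.2
    _ < r := h

section GradientMap

variable {X G Y H : Type*} [NormedAddCommGroup X] [NormedSpace ℝ X] [NormedAddCommGroup G]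
  [NormedSpace ℝ G] [NormedAddCommGroup Y] [NormedSpace ℝ Y] [NormedAddCommGroup H]
  [NormedSpace ℝ H] {jXG : X →L[ℝ] G} {jYH : Y →L[ℝ] H} {jHG : H →L[ℝ] G →L[ℝ] ℝ}
  {M : X → Y} {x ξ : X} {t : ℝ}

theorem hasDerivAt_comp_add_smul_of_gradient {E : X → ℝ}
    (hE : DifferentiableAt ℝ E (x + t • ξ))
    (hgrad : ∀ v, fderiv ℝ E (x + t • ξ) v = jHG (jYH (M (x + t • ξ))) (jXG v)) :
    HasDerivAt (fun s : ℝ => E (x + s • ξ)) (jHG (jYH (M (x + t • ξ))) (jXG ξ)) t := by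
  rw [← hgrad]
  exact hE.hasFDerivAt.hasDerivAt_comp_add_smul

theorem hasDerivAt_gradient_pairing_comp_add_smul {M₁ : G →L[ℝ] H}
    (hM : DifferentiableAt ℝ M (x + t • ξ))
    (hExt : ∀ v, M₁ (jXG v) = jYH (fderiv ℝ M (x + t • ξ) v)) :
    HasDerivAt (fun s : ℝ => jHG (jYH (M (x + s • ξ))) (jXG ξ)) (jHG (M₁ (jXG ξ)) (jXG ξ)) t := by
  rw [hExt]
  exact (((jHG.flip (jXG ξ)).comp jYH).hasFDerivAt.comp _ hM.hasFDerivAt).hasDerivAt_comp_add_smul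

end GradientMap

theorem energy_upper_bound_morse_bott_general
    {X G Y H : Type*}
    [NormedAddCommGroup X] [NormedSpace ℝ X]
    [NormedAddCommGroup G] [NormedSpace ℝ G]
    [NormedAddCommGroup Y] [NormedSpace ℝ Y]
    [NormedAddCommGroup H] [NormedSpace ℝ H]
    -- continuous embeddings X ⊂ G, Y ⊂ H, H ⊂ G*
    (jXG : X →L[ℝ] G)
    (jYH : Y →L[ℝ] H)
    (jHG : H →L[ℝ] (G →L[ℝ] ℝ))
    -- open convex neighborhood of 0
    {U : Set X} (hUopen : IsOpen U) (hU0 : (0 : X) ∈ U)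
    -- E is C² on U
    (E : X → ℝ) (hE : ContDiffOn ℝ 2 E U)
    -- M is a C¹ gradient map for E (M x regarded in X* via Y ⊂ H ⊂ G* ⊂ X*)
    (M : X → Y) (hM : ContDiffOn ℝ 1 M U)
    (hgrad : ∀ x ∈ U, ∀ v : X, fderiv ℝ E x v = jHG (jYH (M x)) (jXG v))
    -- K is a closed subspace and E(k) = 0, E'(k) = 0 for all k ∈ U ∩ K
    (K : Submodule ℝ X)
    (hEK : ∀ k : X, k ∈ U → k ∈ K → E k = 0 ∧ fderiv ℝ E k = 0)
    -- each M'(x) extends to a bounded operator M₁(x) : G → H,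
    -- continuously in x in the operator norm
    (M₁ : X → (G →L[ℝ] H))
    (hExt : ∀ x ∈ U, ∀ v : X, M₁ x (jXG v) = jYH (fderiv ℝ M x v))
    (hM₁cont : ContinuousOn M₁ U) :
    ∃ C₁ : ℝ, 1 ≤ C₁ ∧ ∃ δ ∈ Ioc (0 : ℝ) 1,
      ∀ ξ : X, ∀ k : X, k ∈ U → k ∈ K → ‖ξ‖ ≤ δ → ‖k‖ ≤ δ → ξ + k ∈ U →
        |E (ξ + k)| ≤ C₁ * ‖jXG ξ‖ ^ 2 := by
  obtain ⟨r, hr, C, hballU, hM₁bdd⟩ :=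
    (hM₁cont 0 hU0).exists_ball_subset_norm_le (hUopen.mem_nhds hU0)
  refine ⟨max 1 (‖jHG‖ * C), le_max_left _ _, min 1 (r / 3), ⟨by positivity, min_le_left _ _⟩, ?_⟩
  intro ξ k hkU hkK hξ hk _
  have hball : ∀ t ∈ Icc (0 : ℝ) 1, k + t • ξ ∈ ball 0 r := fun t ht =>
    add_smul_mem_ball_zero ht (by linarith [min_le_right 1 (r / 3)])
  have hU : ∀ t ∈ Icc (0 : ℝ) 1, U ∈ nhds (k + t • ξ) := fun t ht =>
    hUopen.mem_nhds (hballU (hball t ht))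
  have hEk := hEK k hkU hkK
  have hE'k : jHG (jYH (M (k + (0 : ℝ) • ξ))) (jXG ξ) = 0 := by
    simp [← hgrad k hkU, hEk.2]
  have key := norm_image_sub_le_of_deriv_zero_of_norm_deriv2_le_segment_01
    (fun t ht => (hasDerivAt_comp_add_smul_of_gradient
      ((hE.contDiffAt (hU t ht)).differentiableAt two_ne_zero)
      (hgrad _ (mem_of_mem_nhds (hU t ht)))).hasDerivWithinAt)
    (fun t ht => (hasDerivAt_gradient_pairing_comp_add_smul
      ((hM.contDiffAt (hU t ht)).differentiableAt one_ne_zero)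
      (hExt _ (mem_of_mem_nhds (hU t ht)))).hasDerivWithinAt)
    hE'k (C := ‖jHG‖ * C * ‖jXG ξ‖ ^ 2) fun t ht =>
      (jHG.norm_apply_apply_self_le _ _).trans <| by
        gcongr; exact hM₁bdd _ (hball t (Ico_subset_Icc_self ht))
  simp only [zero_smul, add_zero, one_smul, hEk.1, sub_zero, Real.norm_eq_abs] at key
  rw [add_comm]
  exact key.trans (by gcongr; exact le_max_right _ _)

/-- **Energy upper bound in the proof of the Morse–Bott Łojasiewicz–Simon theorem.**
`X, G, Y, H` are real Banach spaces with continuous embeddings `X ⊂ G` (via `jXG`) and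
`Y ⊂ H ⊂ G* ⊂ X*` (via `jYH`, `jHG`, and the transpose of `jXG`).  `U ⊂ X` is an open convex
neighborhood of `0`, `E : U → ℝ` is `C²`, and `M : U → Y` is a `C¹` gradient map for `E`.
`K ⊂ X` is a closed subspace on which (within `U`) both `E` and `E'` vanish.  Each `M'(x)`
admits a bounded extension `M₁(x) : G → H` depending continuously on `x` in the operator norm.
Then there are `C₁ ≥ 1` and `δ ∈ (0,1]` with `|E(ξ + k)| ≤ C₁ ‖ξ‖_G²` for all `ξ ∈ X` and
`k ∈ U ∩ K` with `‖ξ‖_X ≤ δ`, `‖k‖_X ≤ δ`, and `ξ + k ∈ U`. -/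
theorem energy_upper_bound_morse_bott
    {X G Y H : Type*}
    [NormedAddCommGroup X] [NormedSpace ℝ X] [CompleteSpace X]
    [NormedAddCommGroup G] [NormedSpace ℝ G] [CompleteSpace G]
    [NormedAddCommGroup Y] [NormedSpace ℝ Y] [CompleteSpace Y]
    [NormedAddCommGroup H] [NormedSpace ℝ H] [CompleteSpace H]
    -- continuous embeddings X ⊂ G, Y ⊂ H, H ⊂ G*
    (jXG : X →L[ℝ] G) (hjXG : Function.Injective jXG)
    (jYH : Y →L[ℝ] H) (hjYH : Function.Injective jYH)
    (jHG : H →L[ℝ] (G →L[ℝ] ℝ)) (hjHG : Function.Injective jHG)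
    -- the embedding G* ⊂ X* is the transpose of X ⊂ G (and is injective)
    (hTransInj : Function.Injective fun φ : G →L[ℝ] ℝ => φ.comp jXG)
    -- open convex neighborhood of 0
    {U : Set X} (hUopen : IsOpen U) (hUconv : Convex ℝ U) (hU0 : (0 : X) ∈ U)
    -- E is C² on U
    (E : X → ℝ) (hE : ContDiffOn ℝ 2 E U)
    -- M is a C¹ gradient map for E (M x regarded in X* via Y ⊂ H ⊂ G* ⊂ X*)
    (M : X → Y) (hM : ContDiffOn ℝ 1 M U)
    (hgrad : ∀ x ∈ U, ∀ v : X, fderiv ℝ E x v = jHG (jYH (M x)) (jXG v))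
    -- K is a closed subspace and E(k) = 0, E'(k) = 0 for all k ∈ U ∩ K
    (K : Submodule ℝ X) (hKclosed : IsClosed (K : Set X))
    (hEK : ∀ k : X, k ∈ U → k ∈ K → E k = 0 ∧ fderiv ℝ E k = 0)
    -- each M'(x) extends to a bounded operator M₁(x) : G → H,
    -- continuously in x in the operator norm
    (M₁ : X → (G →L[ℝ] H))
    (hExt : ∀ x ∈ U, ∀ v : X, M₁ x (jXG v) = jYH (fderiv ℝ M x v))
    (hM₁cont : ContinuousOn M₁ U) :
    ∃ C₁ : ℝ, 1 ≤ C₁ ∧ ∃ δ ∈ Ioc (0 : ℝ) 1,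
      ∀ ξ : X, ∀ k : X, k ∈ U → k ∈ K → ‖ξ‖ ≤ δ → ‖k‖ ≤ δ → ξ + k ∈ U →
        |E (ξ + k)| ≤ C₁ * ‖jXG ξ‖ ^ 2 :=
  energy_upper_bound_morse_bott_general jXG jYH jHG hUopen hU0 E hE M hM hgrad K hEK M₁ hExt hM₁cont
end
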